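/- Let (Π, ρ) be a metric space and d ≥ 1 a real number, and suppose that for every ε ∈ (0,1), every finite subset of Π whose ε-balls cover Π has size at least ε^{−d}. Fix γ ≥ 1 and set ε_γ := 6^{−2}·γ^{−1/(d+1)}. Then for every Borel probability measure p on Π there exists a 1-Lipschitz function f : Π → [0,1] such that: (i) 0 ≤ sup_{π'} f(π') − f(π) ≤ ε_γ for every π ∈ Π; and (ii) ∫ [ sup_{π'} f(π') − f(π) − γ·D_H²(Ber(f(π)), Ber(1/2)) ] dp(π) ≥ 2^{−7}·γ^{−1/(d+1)}. -/

import Mathlib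

open MeasureTheory

/-- Squared Hellinger distance `D_H²(P,Q) = ∫ (√(dP/dν) − √(dQ/dν))² dν`
computed with the dominating measure `ν = P + Q`. -/
noncomputable def sqHellinger {α : Type*} [MeasurableSpace α] (P Q : Measure α) : ℝ :=
  ∫ x, (Real.sqrt ((P.rnDeriv (P + Q)) x).toReal
      - Real.sqrt ((Q.rnDeriv (P + Q)) x).toReal) ^ 2 ∂(P + Q)

/-- Bernoulli distribution on `{0,1} ⊆ ℝ` with mean `q`. -/
noncomputable def bern (q : ℝ) : Measure ℝ :=
  ENNReal.ofReal q • Measure.dirac 1 + ENNReal.ofReal (1 - q) • Measure.dirac 0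

/-!
Let `ε = εγ`. Some `2ε`-separated finite set has at least `(2ε)^{-d}` points (a maximal one is a
`2ε`-cover), and the `ε`-balls around its points are disjoint, so some ball `B(x₀, ε)` has
`p`-mass at most `(2ε)^d`. Take `f = 1/2 + (ε - dist · x₀)⁺`. Off that ball the regret is `ε` and
the Hellinger term vanishes; on it the regret is nonnegative and
`D_H² ≤ χ² = 4 (f - 1/2)² ≤ 4ε²`. Hence the integral is at least `ε - (ε + 4γε²)(2ε)^d`, and
`2ε = γ^{-1/(d+1)}/18` gives `γ (2ε)^{d+1} = 18^{-(d+1)}`, so this is of order `γ^{-1/(d+1)}`.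
-/

open Metric Set
open scoped ENNReal NNReal

lemma sqHellinger_nonneg {α : Type*} [MeasurableSpace α] (P Q : Measure α) :
    0 ≤ sqHellinger P Q :=
  integral_nonneg fun _ ↦ sq_nonneg _

lemma mul_sq_sqrt_div_sub_sqrt_div {a b : ℝ} (ha : 0 ≤ a) (hb : 0 ≤ b) :
    (a + b) * (√(a / (a + b)) - √(b / (a + b))) ^ 2 = (√a - √b) ^ 2 := by
  rcases (add_nonneg ha hb).eq_or_lt with hab | hab
  · obtain ⟨rfl, rfl⟩ : a = 0 ∧ b = 0 := ⟨by linarith, by linarith⟩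
    simp
  · rw [Real.sqrt_div ha, Real.sqrt_div hb, div_sub_div_same, div_pow, Real.sq_sqrt hab.le,
      mul_div_cancel₀ _ hab.ne']

lemma sq_sqrt_sub_sqrt_le {a b : ℝ} (ha : 0 ≤ a) (hb : 0 < b) :
    (√a - √b) ^ 2 ≤ (a - b) ^ 2 / b := by
  have hsq : (a - b) ^ 2 = (√a - √b) ^ 2 * (√a + √b) ^ 2 := by
    rw [← mul_pow, mul_comm, ← sq_sub_sq, Real.sq_sqrt ha, Real.sq_sqrt hb.le]
  have hb' : b ≤ (√a + √b) ^ 2 := by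
    nlinarith [Real.sq_sqrt hb.le, Real.sqrt_nonneg a, Real.sqrt_nonneg b]
  rw [le_div_iff₀ hb, hsq]
  exact mul_le_mul_of_nonneg_left hb' (sq_nonneg _)

section TwoPoint

variable {α : Type*} [MeasurableSpace α]

noncomputable def twoPointMeasure (x y : α) (a b : ℝ) : Measure α :=
  ENNReal.ofReal a • Measure.dirac x + ENNReal.ofReal b • Measure.dirac y

variable {x y : α} {a b a' b' : ℝ}

lemma twoPointMeasure_add (ha : 0 ≤ a) (hb : 0 ≤ b) (ha' : 0 ≤ a') (hb' : 0 ≤ b') :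
    twoPointMeasure x y a b + twoPointMeasure x y a' b' =
      twoPointMeasure x y (a + a') (b + b') := by
  simp only [twoPointMeasure, ENNReal.ofReal_add ha ha', ENNReal.ofReal_add hb hb', add_smul]
  abel

instance (x y : α) (a b : ℝ) : IsFiniteMeasure (twoPointMeasure x y a b) := by
  unfold twoPointMeasure
  constructor
  simp

variable [MeasurableSingletonClass α]

lemma withDensity_smul_dirac (c : ℝ≥0∞) (x : α) (g : α → ℝ≥0∞) :
    (c • Measure.dirac x).withDensity g = (c * g x) • Measure.dirac x := by
  rw [withDensity_smul_measure, dirac_withDensity, smul_smul]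

lemma rnDeriv_twoPointMeasure [DecidableEq α] (hxy : x ≠ y) (ha : 0 ≤ a) (hb : 0 ≤ b)
    (haa' : a ≤ a') (hbb' : b ≤ b') :
    (twoPointMeasure x y a b).rnDeriv (twoPointMeasure x y a' b') =ᵐ[twoPointMeasure x y a' b']
      fun z ↦ if z = x then ENNReal.ofReal (a / a') else ENNReal.ofReal (b / b') := by
  refine (Measure.eq_rnDeriv ?_ Measure.MutuallySingular.zero_left ?_).symm
  · exact measurable_const.ite (measurableSet_singleton x) measurable_const
  have h₁ : a' * (a / a') = a := mul_div_cancel_of_imp' fun h ↦ by linarith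
  have h₂ : b' * (b / b') = b := mul_div_cancel_of_imp' fun h ↦ by linarith
  simp only [twoPointMeasure]
  rw [zero_add, withDensity_add_measure, withDensity_smul_dirac,
    withDensity_smul_dirac, if_pos rfl, if_neg hxy.symm, ← ENNReal.ofReal_mul (by linarith),
    ← ENNReal.ofReal_mul (by linarith), h₁, h₂]

lemma integral_twoPointMeasure (F : α → ℝ) (ha : 0 ≤ a) (hb : 0 ≤ b) :
    ∫ z, F z ∂twoPointMeasure x y a b = a * F x + b * F y := by
  have hF : ∀ z, Integrable F (Measure.dirac z) := fun z ↦ integrable_dirac enorm_lt_top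
  rw [twoPointMeasure, integral_add_measure ((hF x).smul_measure ENNReal.ofReal_ne_top)
    ((hF y).smul_measure ENNReal.ofReal_ne_top), integral_smul_measure, integral_smul_measure,
    integral_dirac, integral_dirac, ENNReal.toReal_ofReal ha, ENNReal.toReal_ofReal hb,
    smul_eq_mul, smul_eq_mul]

lemma sqHellinger_twoPointMeasure (hxy : x ≠ y) (ha : 0 ≤ a) (hb : 0 ≤ b) (ha' : 0 ≤ a')
    (hb' : 0 ≤ b') :
    sqHellinger (twoPointMeasure x y a b) (twoPointMeasure x y a' b') =
      (√a - √a') ^ 2 + (√b - √b') ^ 2 := by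
  classical
  have hP := rnDeriv_twoPointMeasure hxy ha hb (le_add_of_nonneg_right ha')
    (le_add_of_nonneg_right hb')
  have hQ := rnDeriv_twoPointMeasure (x := x) (y := y) hxy ha' hb' (le_add_of_nonneg_left ha)
    (le_add_of_nonneg_left hb)
  rw [sqHellinger, twoPointMeasure_add ha hb ha' hb']
  rw [integral_congr_ae (hP.mp (hQ.mono fun z hQz hPz ↦ by rw [hPz, hQz])),
    integral_twoPointMeasure _ (add_nonneg ha ha') (add_nonneg hb hb')]
  simp only [if_pos, if_neg hxy.symm]
  rw [ENNReal.toReal_ofReal (by positivity), ENNReal.toReal_ofReal (by positivity),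
    ENNReal.toReal_ofReal (by positivity), ENNReal.toReal_ofReal (by positivity),
    mul_sq_sqrt_div_sub_sqrt_div ha ha', mul_sq_sqrt_div_sub_sqrt_div hb hb']

end TwoPoint

lemma bern_eq_twoPointMeasure (q : ℝ) : bern q = twoPointMeasure 1 0 q (1 - q) := rfl

lemma sqHellinger_bern {p q : ℝ} (hp : p ∈ Icc (0 : ℝ) 1) (hq : q ∈ Icc (0 : ℝ) 1) :
    sqHellinger (bern p) (bern q) = (√p - √q) ^ 2 + (√(1 - p) - √(1 - q)) ^ 2 := by
  rw [bern_eq_twoPointMeasure, bern_eq_twoPointMeasure,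
    sqHellinger_twoPointMeasure one_ne_zero hp.1 (by linarith [hp.2]) hq.1 (by linarith [hq.2])]

lemma continuousOn_sqHellinger_bern {q : ℝ} (hq : q ∈ Icc (0 : ℝ) 1) :
    ContinuousOn (fun p ↦ sqHellinger (bern p) (bern q)) (Icc 0 1) :=
  ContinuousOn.congr (by fun_prop) fun _ hp ↦ sqHellinger_bern hp hq

lemma sqHellinger_bern_le_chiSq {p q : ℝ} (hp : p ∈ Icc (0 : ℝ) 1) (hq : q ∈ Ioo (0 : ℝ) 1) :
    sqHellinger (bern p) (bern q) ≤ (p - q) ^ 2 / q + (p - q) ^ 2 / (1 - q) := by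
  rw [sqHellinger_bern hp (Ioo_subset_Icc_self hq)]
  have h₀ := sq_sqrt_sub_sqrt_le hp.1 hq.1
  have h₁ := sq_sqrt_sub_sqrt_le (sub_nonneg.2 hp.2) (sub_pos.2 hq.2)
  rw [show (1 - p - (1 - q)) ^ 2 = (p - q) ^ 2 by ring] at h₁
  exact add_le_add h₀ h₁

lemma sqHellinger_bern_half_le {p : ℝ} (hp : p ∈ Icc (0 : ℝ) 1) :
    sqHellinger (bern p) (bern (1 / 2)) ≤ 4 * (p - 1 / 2) ^ 2 :=
  (sqHellinger_bern_le_chiSq hp ⟨by norm_num, by norm_num⟩).trans_eq (by ring)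

section Tent

variable {X : Type*} [PseudoMetricSpace X]

def tent (x₀ : X) (ε : ℝ) (x : X) : ℝ := max 0 (ε - dist x x₀)

variable {x₀ x : X} {ε : ℝ}

lemma tent_nonneg : 0 ≤ tent x₀ ε x := le_max_left _ _

lemma tent_le (hε : 0 ≤ ε) : tent x₀ ε x ≤ ε :=
  max_le hε (sub_le_self _ dist_nonneg)

lemma tent_self (hε : 0 ≤ ε) : tent x₀ ε x₀ = ε := by
  simp [tent, hε]

lemma tent_eq_zero_of_notMem_ball (hx : x ∉ ball x₀ ε) : tent x₀ ε x = 0 :=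
  max_eq_left (sub_nonpos.2 (not_lt.1 hx))

lemma lipschitzWith_tent (x₀ : X) (ε : ℝ) : LipschitzWith 1 (tent x₀ ε) :=
  LipschitzWith.of_le_add fun x y ↦ max_le (add_nonneg tent_nonneg dist_nonneg) <| by
    have : ε - dist y x₀ ≤ tent x₀ ε y := le_max_right _ _
    linarith [dist_triangle y x x₀, dist_comm x y]

lemma ciSup_const_add_tent (c : ℝ) (hε : 0 ≤ ε) : ⨆ x, (c + tent x₀ ε x) = c + ε :=
  haveI : Nonempty X := ⟨x₀⟩
  ciSup_eq_of_forall_le_of_forall_lt_exists_gt (fun _ ↦ by grw [tent_le hε])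
    fun _ hw ↦ ⟨x₀, by rwa [tent_self hε]⟩

end Tent

section Packing

variable {X : Type*} [PseudoMetricSpace X]

lemma exists_isSeparated_finset_card_eq {r : ℝ≥0} (h : packingNumber r (univ : Set X) = ⊤)
    (n : ℕ) : ∃ s : Finset X, IsSeparated r (s : Set X) ∧ s.card = n := by
  have hn : (n : ℕ∞) < packingNumber r (univ : Set X) := h ▸ ENat.natCast_lt_top n
  simp only [packingNumber, lt_iSup_iff] at hn
  obtain ⟨C, -, hC, hn⟩ := hn
  obtain ⟨t, htC, ht⟩ := exists_subset_encard_eq hn.le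
  have htf : t.Finite := finite_of_encard_eq_coe ht
  refine ⟨htf.toFinset, by simpa using hC.subset htC, ?_⟩
  rwa [htf.encard_eq_coe_toFinset_card, Nat.cast_inj] at ht

lemma exists_isSeparated_finset_le_card {r : ℝ≥0} {N : ℝ}
    (hcover : ∀ s : Finset X, (∀ x, ∃ y ∈ s, dist x y ≤ r) → N ≤ s.card) :
    ∃ s : Finset X, IsSeparated r (s : Set X) ∧ N ≤ s.card := by
  by_cases h : packingNumber r (univ : Set X) = ⊤
  · obtain ⟨s, hs, hcard⟩ := exists_isSeparated_finset_card_eq h ⌈N⌉₊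
    exact ⟨s, hs, hcard ▸ Nat.le_ceil N⟩
  · have hfin : (maximalSeparatedSet r (univ : Set X)).Finite :=
      encard_ne_top_iff.1 (encard_maximalSeparatedSet h ▸ h)
    refine ⟨hfin.toFinset, by rw [hfin.coe_toFinset]; exact isSeparated_maximalSeparatedSet,
      hcover _ fun x ↦ ?_⟩
    obtain ⟨y, hy, hxy⟩ := isCover_maximalSeparatedSet h (mem_univ x)
    have hxy : edist x y ≤ r := hxy
    rw [edist_le_coe, ← NNReal.coe_le_coe, coe_nndist] at hxy
    exact ⟨y, hfin.mem_toFinset.2 hy, hxy⟩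

variable [MeasurableSpace X] [OpensMeasurableSpace X]

lemma exists_card_mul_measureReal_ball_le (μ : Measure X) [IsFiniteMeasure μ] {ε : ℝ≥0}
    {s : Finset X} (hs : s.Nonempty) (hsep : IsSeparated (2 * ε : ℝ≥0) (s : Set X)) :
    ∃ x ∈ s, s.card * μ.real (ball x ε) ≤ μ.real univ := by
  have hdisj : (s : Set X).PairwiseDisjoint fun x ↦ ball x ε := fun a ha b hb hab ↦ by
    have hab : ((2 * ε : ℝ≥0) : ℝ≥0∞) < edist a b := hsep ha hb hab
    rw [edist_nndist, ENNReal.coe_lt_coe, ← NNReal.coe_lt_coe, coe_nndist] at hab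
    exact ball_disjoint_ball (by push_cast at hab; linarith)
  have hsum : ∑ x ∈ s, μ.real (ball x ε) ≤ μ.real univ := by
    rw [← measureReal_biUnion_finset hdisj fun _ _ ↦ measurableSet_ball]
    exact measureReal_mono (subset_univ _)
  refine Finset.exists_le_of_sum_le hs ?_
  rw [← Finset.mul_sum, Finset.sum_const, nsmul_eq_mul]
  exact mul_le_mul_of_nonneg_left hsum (Nat.cast_nonneg _)

lemma exists_measureReal_ball_le (p : Measure X) [IsProbabilityMeasure p] {d ε : ℝ} (hε : 0 < ε)
    (hcover : ∀ s : Finset X, (∀ x, ∃ y ∈ s, dist x y ≤ 2 * ε) → (2 * ε) ^ (-d) ≤ s.card) :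
    ∃ x, p.real (ball x ε) ≤ (2 * ε) ^ d := by
  lift ε to ℝ≥0 using hε.le
  obtain ⟨s, hsep, hcard⟩ := exists_isSeparated_finset_le_card (r := 2 * ε)
    (N := (2 * (ε : ℝ)) ^ (-d)) fun s hs ↦ hcover s (by exact_mod_cast hs)
  have hδ : 0 < (2 * (ε : ℝ)) ^ d := by positivity
  rw [Real.rpow_neg (by positivity)] at hcard
  have hs : s.Nonempty := Finset.card_pos.1 (by exact_mod_cast (inv_pos.2 hδ).trans_le hcard)
  obtain ⟨x, -, hx⟩ := exists_card_mul_measureReal_ball_le p hs hsep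
  refine ⟨x, ?_⟩
  rw [probReal_univ] at hx
  have : p.real (ball x ε) * ((2 * (ε : ℝ)) ^ d)⁻¹ ≤ 1 :=
    (mul_le_mul_of_nonneg_left hcard measureReal_nonneg).trans (by linarith)
  rwa [← div_eq_mul_inv, div_le_one hδ] at this

end Packing

lemma le_integral_tent_regret_sub_sqHellinger {X : Type*} [PseudoMetricSpace X]
    [MeasurableSpace X] [OpensMeasurableSpace X] (p : Measure X) [IsProbabilityMeasure p]
    (x₀ : X) {ε γ : ℝ} (hε : 0 ≤ ε) (hε' : ε ≤ 1 / 2) (hγ : 0 ≤ γ) :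
    ε - (ε + 4 * γ * ε ^ 2) * p.real (ball x₀ ε) ≤
      ∫ x, (ε - tent x₀ ε x - γ * sqHellinger (bern (1 / 2 + tent x₀ ε x)) (bern (1 / 2))) ∂p := by
  set G := fun x ↦ ε - tent x₀ ε x - γ * sqHellinger (bern (1 / 2 + tent x₀ ε x)) (bern (1 / 2))
  set L := fun x ↦ ε - (ε + 4 * γ * ε ^ 2) * (ball x₀ ε).indicator 1 x
  have ht : ∀ x, 0 ≤ tent x₀ ε x ∧ tent x₀ ε x ≤ ε := fun _ ↦ ⟨tent_nonneg, tent_le hε⟩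
  have hmem : ∀ x, 1 / 2 + tent x₀ ε x ∈ Icc (0 : ℝ) 1 := fun x ↦
    ⟨by linarith [ht x], by linarith [ht x]⟩
  have hG : ∀ x, -(4 * γ * ε ^ 2) ≤ G x ∧ G x ≤ ε := fun x ↦ by
    have hH : sqHellinger (bern (1 / 2 + tent x₀ ε x)) (bern (1 / 2)) ≤ 4 * ε ^ 2 :=
      (sqHellinger_bern_half_le (hmem x)).trans (by nlinarith [ht x])
    have := mul_le_mul_of_nonneg_left hH hγ
    have := mul_nonneg hγ (sqHellinger_nonneg (bern (1 / 2 + tent x₀ ε x)) (bern (1 / 2)))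
    constructor <;> linarith [ht x]
  have hLG : ∀ x, L x ≤ G x := fun x ↦ by
    by_cases hx : x ∈ ball x₀ ε
    · simp only [L, indicator_of_mem hx, Pi.one_apply]
      linarith [hG x]
    · simp only [L, G, indicator_of_notMem hx, tent_eq_zero_of_notMem_ball hx]
      norm_num [sqHellinger_bern]
  have hG_cont : Continuous G := by
    have ht : Continuous (tent x₀ ε) := (lipschitzWith_tent x₀ ε).continuous
    have hH := (continuousOn_sqHellinger_bern (q := 1 / 2) ⟨by norm_num, by norm_num⟩)
      |>.comp_continuous (continuous_const.add ht) hmem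
    exact (continuous_const.sub ht).sub (continuous_const.mul hH)
  have hG_int : Integrable G p :=
    .of_bound hG_cont.aestronglyMeasurable (ε + 4 * γ * ε ^ 2) <| ae_of_all _ fun x ↦
      abs_le.2 ⟨by linarith [hG x], by linarith [hG x, mul_nonneg hγ (sq_nonneg ε)]⟩
  have h_ind : Integrable ((ball x₀ ε).indicator (1 : X → ℝ)) p :=
    (integrable_const 1).indicator measurableSet_ball
  calc ε - (ε + 4 * γ * ε ^ 2) * p.real (ball x₀ ε) = ∫ x, L x ∂p := by
        rw [integral_sub (integrable_const ε) (h_ind.const_mul _), integral_const,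
          integral_const_mul, integral_indicator_one measurableSet_ball, probReal_univ, one_smul]
    _ ≤ ∫ x, G x ∂p := integral_mono ((integrable_const ε).sub (h_ind.const_mul _)) hG_int hLG

lemma mul_div_eighteen_rpow_add_one_le {d γ : ℝ} (hd : 1 ≤ d) (hγ : 0 < γ) :
    γ * (γ ^ (-1 / (d + 1)) / 18) ^ (d + 1) ≤ 1 / 324 := by
  have h18 : (324 : ℝ) ≤ 18 ^ (d + 1) :=
    calc (324 : ℝ) = 18 ^ (2 : ℝ) := by norm_num
      _ ≤ 18 ^ (d + 1) := Real.rpow_le_rpow_of_exponent_le (by norm_num) (by linarith)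
  rw [Real.div_rpow (by positivity) (by norm_num), ← Real.rpow_mul hγ.le,
    div_mul_cancel₀ _ (by linarith : d + 1 ≠ 0), Real.rpow_neg_one, mul_div_assoc',
    mul_inv_cancel₀ hγ.ne']
  exact one_div_le_one_div_of_le (by norm_num) h18

lemma le_sub_mul_rpow {d γ ε : ℝ} (hd : 1 ≤ d) (hε : 0 < ε) (hε' : 2 * ε ≤ 1 / 18)
    (hγ : γ * (2 * ε) ^ (d + 1) ≤ 1 / 324) :
    9 / 32 * ε ≤ ε - (ε + 4 * γ * ε ^ 2) * (2 * ε) ^ d := by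
  have hA : (2 * ε) ^ d ≤ 2 * ε := by
    simpa using Real.rpow_le_rpow_of_exponent_ge (by positivity) (by linarith) hd
  have hsplit : (ε + 4 * γ * ε ^ 2) * (2 * ε) ^ d =
      ε * (2 * ε) ^ d + 2 * ε * (γ * (2 * ε) ^ (d + 1)) := by
    rw [Real.rpow_add_one (by positivity)]
    ring
  have h₁ := mul_le_mul_of_nonneg_left (hA.trans hε') hε.le
  have h₂ := mul_le_mul_of_nonneg_left hγ hε.le
  linarith

/-- lower bound on the localized Decision-Estimation Coefficient for
Lipschitz bandits in a metric space whose `ε`-covering numbers are at least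
`ε^{−d}`.  Models have Bernoulli rewards `Ber(f(π))` with 1-Lipschitz mean `f`,
the reference model is `Ber(1/2)`, and `sup f − f(π)` is the regret of `π`. -/
theorem lipschitz_bandit_dec_lower_bound {X : Type*} [MetricSpace X] [MeasurableSpace X]
    [BorelSpace X] (d : ℝ) (hd : 1 ≤ d)
    (hpack : ∀ ε : ℝ, ε ∈ Set.Ioo (0 : ℝ) 1 → ∀ s : Finset X,
      (∀ π : X, ∃ π' ∈ s, dist π π' ≤ ε) → ε ^ (-d) ≤ (s.card : ℝ))
    (γ : ℝ) (hγ : 1 ≤ γ) (εγ : ℝ) (hεγ : εγ = (6 : ℝ) ^ (-(2 : ℤ)) * γ ^ (-1 / (d + 1)))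
    (p : Measure X) [IsProbabilityMeasure p] :
    ∃ f : X → ℝ, LipschitzWith 1 f ∧ (∀ π, f π ∈ Set.Icc (0 : ℝ) 1) ∧
      (∀ π, 0 ≤ (⨆ π', f π') - f π ∧ (⨆ π', f π') - f π ≤ εγ) ∧
      (2 : ℝ) ^ (-(7 : ℤ)) * γ ^ (-1 / (d + 1)) ≤
        ∫ π, ((⨆ π', f π') - f π - γ * sqHellinger (bern (f π)) (bern (1 / 2))) ∂p := by
  have hγ₀ : 0 < γ := by linarith
  set u := γ ^ (-1 / (d + 1))
  have hu : 0 < u := Real.rpow_pos_of_pos hγ₀ _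
  have hu₁ : u ≤ 1 := Real.rpow_le_one_of_one_le_of_nonpos hγ
    (div_nonpos_of_nonpos_of_nonneg (by norm_num) (by linarith))
  have hεu : εγ = u / 36 := by rw [hεγ]; norm_num; ring
  have hε : 0 < εγ := by rw [hεu]; positivity
  obtain ⟨x₀, hx₀⟩ := exists_measureReal_ball_le p (d := d) hε
    fun s hs ↦ hpack _ ⟨by positivity, by linarith⟩ s hs
  have ht : ∀ x, 0 ≤ tent x₀ εγ x ∧ tent x₀ εγ x ≤ εγ := fun _ ↦ ⟨tent_nonneg, tent_le hε.le⟩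
  have hsup := ciSup_const_add_tent (x₀ := x₀) (1 / 2) hε.le
  have hregret : ∀ x, 1 / 2 + εγ - (1 / 2 + tent x₀ εγ x) = εγ - tent x₀ εγ x := fun _ ↦ by ring
  refine ⟨fun x ↦ 1 / 2 + tent x₀ εγ x, ?_, fun x ↦ ⟨?_, ?_⟩, fun x ↦ ?_, ?_⟩
  · simpa only [zero_add] using (LipschitzWith.const (1 / 2)).add (lipschitzWith_tent x₀ εγ)
  · linarith [ht x]
  · linarith [ht x]
  · simp only [hsup, hregret]
    constructor <;> linarith [ht x]
  simp only [hsup, hregret]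
  calc (2 : ℝ) ^ (-(7 : ℤ)) * u = 9 / 32 * εγ := by rw [hεu]; norm_num; ring
    _ ≤ εγ - (εγ + 4 * γ * εγ ^ 2) * (2 * εγ) ^ d := by
      refine le_sub_mul_rpow hd hε (by linarith) ?_
      rw [show 2 * εγ = u / 18 by linarith]
      exact mul_div_eighteen_rpow_add_one_le hd hγ₀
    _ ≤ εγ - (εγ + 4 * γ * εγ ^ 2) * p.real (ball x₀ εγ) := by gcongr
    _ ≤ _ := le_integral_tent_regret_sub_sqHellinger p x₀ hε.le (by linarith) hγ₀.le
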